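/- Let g : ℝ → ℝ² be three times continuously differentiable on an open interval I with g'(ξ) ≠ 0 on I, let u : ℝ² → ℝ be twice continuously differentiable, and let (η,ξ) ∈ ℝ × I satisfy 1 + η κ(ξ) ≠ 0. Set û(η,ξ) = u(P(η,ξ)). Then the Laplacian of u transforms in Frenet coordinates as Δu(P(η,ξ)) = û_ηη(η,ξ) + J₀(η,ξ) û_ξξ(η,ξ) + J₁(η,ξ) û_η(η,ξ) + J₂(η,ξ) û_ξ(η,ξ), where ψ(η,ξ) = (1 + ηκ(ξ))⁻¹, J₀ = (ψ/‖g'(ξ)‖)², J₁ = κ(ξ)ψ, and J₂ = −(ψ/‖g'(ξ)‖)² ( η κ'(ξ) ψ + (g'(ξ)·g''(ξ))/‖g'(ξ)‖² ). -/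

import Mathlib

/-!
Along the normal line `η ↦ P(η,ξ)` the velocity is the unit normal `n`, and along `ξ ↦ P(η,ξ)`
it is `V = (1 + ηκ) g'`, by the Frenet formula `n' = κ g'`. The second-order chain rule gives
`û_ηη = D²u(n,n)` and `û_ξξ = D²u(V,V) + Du(V')`, with `V' = ηκ' g' + (1 + ηκ) g''`.
As `(τ, n)` is orthonormal, `Δu = D²u(τ,τ) + D²u(n,n)`, and `D²u(V,V) = ((1 + ηκ)‖g'‖)² D²u(τ,τ)`.
Writing `g''` in the Frenet frame, `g'' = (g'·g''/‖g'‖²) g' - κ‖g'‖² n`, the first-order terms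
`J₀ Du(V')`, `J₁ û_η = κψ Du(n)` and `J₂ û_ξ` cancel.
-/

open Real Set

/-- The speed `‖g'(ξ)‖` (Euclidean norm of the derivative) of a planar curve. -/
noncomputable def speed (g : ℝ → ℝ × ℝ) (ξ : ℝ) : ℝ :=
  Real.sqrt ((deriv g ξ).1 ^ 2 + (deriv g ξ).2 ^ 2)

/-- The unit tangent vector `τ(ξ) = g'(ξ)/‖g'(ξ)‖`. -/
noncomputable def unitTangent (g : ℝ → ℝ × ℝ) (ξ : ℝ) : ℝ × ℝ :=
  ((deriv g ξ).1 / speed g ξ, (deriv g ξ).2 / speed g ξ)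

/-- The unit normal vector `n(ξ) = (τ₂(ξ), -τ₁(ξ))`. -/
noncomputable def unitNormal (g : ℝ → ℝ × ℝ) (ξ : ℝ) : ℝ × ℝ :=
  ((unitTangent g ξ).2, -(unitTangent g ξ).1)

/-- The signed curvature `κ(ξ) = (g₁'(ξ)g₂''(ξ) - g₂'(ξ)g₁''(ξ))/‖g'(ξ)‖³`. -/
noncomputable def signedCurvature (g : ℝ → ℝ × ℝ) (ξ : ℝ) : ℝ :=
  ((deriv g ξ).1 * (deriv (deriv g) ξ).2 - (deriv g ξ).2 * (deriv (deriv g) ξ).1) /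
    speed g ξ ^ 3


/-- The Frenet (tubular) map `P(η,ξ) = g(ξ) + η n(ξ)`, with argument `p = (η, ξ)`. -/
noncomputable def frenetMap (g : ℝ → ℝ × ℝ) (p : ℝ × ℝ) : ℝ × ℝ :=
  g p.2 + p.1 • unitNormal g p.2

/-- Partial derivative with respect to the first coordinate. -/
noncomputable def pd1 (f : ℝ × ℝ → ℝ) (p : ℝ × ℝ) : ℝ := deriv (fun t => f (t, p.2)) p.1

/-- Partial derivative with respect to the second coordinate. -/
noncomputable def pd2 (f : ℝ × ℝ → ℝ) (p : ℝ × ℝ) : ℝ := deriv (fun t => f (p.1, t)) p.2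

open Topology

section PlanarCurve

variable {g : ℝ → ℝ × ℝ} {t : ℝ}

lemma speed_sq (g : ℝ → ℝ × ℝ) (t : ℝ) :
    speed g t ^ 2 = (deriv g t).1 ^ 2 + (deriv g t).2 ^ 2 :=
  Real.sq_sqrt (by positivity)

lemma speed_pos (h : deriv g t ≠ 0) : 0 < speed g t := by
  refine Real.sqrt_pos.mpr ?_
  obtain h | h : (deriv g t).1 ≠ 0 ∨ (deriv g t).2 ≠ 0 := by
    contrapose! h
    exact Prod.ext h.1 h.2
  all_goals positivity

lemma unitTangent_sq_add_sq (h : deriv g t ≠ 0) :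
    (unitTangent g t).1 ^ 2 + (unitTangent g t).2 ^ 2 = 1 := by
  have hs := (speed_pos h).ne'
  simp only [unitTangent]
  field_simp
  exact (speed_sq g t).symm

lemma deriv_eq_speed_smul_unitTangent (h : deriv g t ≠ 0) :
    deriv g t = speed g t • unitTangent g t := by
  have hs := (speed_pos h).ne'
  ext <;> simp only [unitTangent, Prod.smul_fst, Prod.smul_snd, smul_eq_mul] <;> field_simp

lemma deriv_deriv_eq_frenet (h : deriv g t ≠ 0) :
    deriv (deriv g) t =
      (((deriv g t).1 * (deriv (deriv g) t).1 + (deriv g t).2 * (deriv (deriv g) t).2) /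
          speed g t ^ 2) • deriv g t -
        (signedCurvature g t * speed g t ^ 2) • unitNormal g t := by
  have hs := (speed_pos h).ne'
  have hsq := speed_sq g t
  ext <;> simp only [signedCurvature, unitNormal, unitTangent, Prod.smul_fst, Prod.smul_snd,
    Prod.fst_sub, Prod.snd_sub, smul_eq_mul] <;> field_simp
  · linear_combination (deriv (deriv g) t).1 * hsq
  · linear_combination (deriv (deriv g) t).2 * hsq

lemma hasDerivAt_speed (hd : DifferentiableAt ℝ (deriv g) t) (h : deriv g t ≠ 0) :
    HasDerivAt (speed g)
      (((deriv g t).1 * (deriv (deriv g) t).1 + (deriv g t).2 * (deriv (deriv g) t).2) /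
        speed g t) t := by
  have hs := (speed_pos h).ne'
  have h1 := hasFDerivAt_fst.comp_hasDerivAt t hd.hasDerivAt
  have h2 := hasFDerivAt_snd.comp_hasDerivAt t hd.hasDerivAt
  have hq : (deriv g t).1 ^ 2 + (deriv g t).2 ^ 2 ≠ 0 := by rw [← speed_sq]; positivity
  refine ((h1.pow 2).add (h2.pow 2) |>.sqrt hq).congr_deriv ?_
  change _ / (2 * speed g t) = _
  simp only [ContinuousLinearMap.coe_fst', ContinuousLinearMap.coe_snd']
  field_simp
  norm_num
  ring

lemma hasDerivAt_unitNormal (hd : DifferentiableAt ℝ (deriv g) t) (h : deriv g t ≠ 0) :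
    HasDerivAt (unitNormal g) (signedCurvature g t • deriv g t) t := by
  have hs := (speed_pos h).ne'
  have hsq := speed_sq g t
  have h1 := hasFDerivAt_fst.comp_hasDerivAt t hd.hasDerivAt
  have h2 := hasFDerivAt_snd.comp_hasDerivAt t hd.hasDerivAt
  refine ((h2.div (hasDerivAt_speed hd h) hs).prodMk
    (h1.div (hasDerivAt_speed hd h) hs).neg).congr_deriv ?_
  ext <;> simp only [signedCurvature, Function.comp_apply, ContinuousLinearMap.coe_fst',
    ContinuousLinearMap.coe_snd', Prod.smul_fst, Prod.smul_snd, smul_eq_mul] <;> field_simp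
  · linear_combination (deriv (deriv g) t).2 * hsq
  · linear_combination -(deriv (deriv g) t).1 * hsq

lemma differentiableAt_signedCurvature (hd : DifferentiableAt ℝ (deriv g) t)
    (hdd : DifferentiableAt ℝ (deriv (deriv g)) t) (h : deriv g t ≠ 0) :
    DifferentiableAt ℝ (signedCurvature g) t := by
  have d1 := hasFDerivAt_fst.comp_hasDerivAt t hd.hasDerivAt |>.differentiableAt
  have d2 := hasFDerivAt_snd.comp_hasDerivAt t hd.hasDerivAt |>.differentiableAt
  have e1 := hasFDerivAt_fst.comp_hasDerivAt t hdd.hasDerivAt |>.differentiableAt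
  have e2 := hasFDerivAt_snd.comp_hasDerivAt t hdd.hasDerivAt |>.differentiableAt
  exact ((d1.mul e2).sub (d2.mul e1)).div ((hasDerivAt_speed hd h).differentiableAt.pow 3)
    (pow_ne_zero 3 (speed_pos h).ne')

lemma hasDerivAt_frenetMap_fst (g : ℝ → ℝ × ℝ) (η ξ : ℝ) :
    HasDerivAt (fun r => frenetMap g (r, ξ)) (unitNormal g ξ) η := by
  show HasDerivAt (fun r => g ξ + r • unitNormal g ξ) _ η
  exact (((hasDerivAt_id' η).smul_const _).const_add (g ξ)).congr_deriv (one_smul ℝ _)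

lemma hasDerivAt_frenetMap_snd (hd : DifferentiableAt ℝ (deriv g) t) (h : deriv g t ≠ 0)
    (η : ℝ) :
    HasDerivAt (fun r => frenetMap g (η, r)) ((1 + η * signedCurvature g t) • deriv g t) t := by
  refine ((differentiableAt_of_deriv_ne_zero h).hasDerivAt.add
    ((hasDerivAt_unitNormal hd h).const_smul η)).congr_deriv ?_
  rw [smul_smul, add_smul, one_smul]

end PlanarCurve

lemma deriv_deriv_comp_eq {E : Type*} [NormedAddCommGroup E] [NormedSpace ℝ E] {u : E → ℝ}
    (hu : Differentiable ℝ u) {γ v : ℝ → E} {t₀ : ℝ} {v' : E}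
    (hγ : ∀ᶠ t in 𝓝 t₀, HasDerivAt γ (v t) t) (hv : HasDerivAt v v' t₀)
    (hu' : DifferentiableAt ℝ (fderiv ℝ u) (γ t₀)) :
    deriv (deriv (u ∘ γ)) t₀ =
      fderiv ℝ (fderiv ℝ u) (γ t₀) (v t₀) (v t₀) + fderiv ℝ u (γ t₀) v' := by
  have hfirst : deriv (u ∘ γ) =ᶠ[𝓝 t₀] fun t => fderiv ℝ u (γ t) (v t) :=
    hγ.mono fun t ht => ((hu _).hasFDerivAt.comp_hasDerivAt t ht).deriv
  rw [hfirst.deriv_eq]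
  exact ((hu'.hasFDerivAt.comp_hasDerivAt t₀ hγ.self_of_nhds).clm_apply hv).deriv

lemma pd1_pd1_eq_fderiv {u : ℝ × ℝ → ℝ} (hu : Differentiable ℝ u) {p : ℝ × ℝ}
    (hu' : DifferentiableAt ℝ (fderiv ℝ u) p) :
    pd1 (pd1 u) p = fderiv ℝ (fderiv ℝ u) p (1, 0) (1, 0) := by
  have hγ : ∀ t, HasDerivAt (fun s => (s, p.2)) ((1 : ℝ), (0 : ℝ)) t := fun t =>
    (hasDerivAt_id t).prodMk (hasDerivAt_const t p.2)
  exact (deriv_deriv_comp_eq hu (.of_forall hγ) (hasDerivAt_const p.1 _) hu').trans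
    (by rw [map_zero, add_zero])

lemma pd2_pd2_eq_fderiv {u : ℝ × ℝ → ℝ} (hu : Differentiable ℝ u) {p : ℝ × ℝ}
    (hu' : DifferentiableAt ℝ (fderiv ℝ u) p) :
    pd2 (pd2 u) p = fderiv ℝ (fderiv ℝ u) p (0, 1) (0, 1) := by
  have hγ : ∀ t, HasDerivAt (fun s => (p.1, s)) ((0 : ℝ), (1 : ℝ)) t := fun t =>
    (hasDerivAt_const t p.1).prodMk (hasDerivAt_id t)
  exact (deriv_deriv_comp_eq hu (.of_forall hγ) (hasDerivAt_const p.2 _) hu').trans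
    (by rw [map_zero, add_zero])

lemma ContinuousLinearMap.apply_eq_fst_smul_add_snd_smul {F : Type*} [NormedAddCommGroup F]
    [NormedSpace ℝ F] (T : ℝ × ℝ →L[ℝ] F) (w : ℝ × ℝ) :
    T w = w.1 • T (1, 0) + w.2 • T (0, 1) := by
  conv_lhs => rw [show w = w.1 • ((1 : ℝ), (0 : ℝ)) + w.2 • ((0 : ℝ), (1 : ℝ)) by ext <;> simp]
  rw [map_add, map_smul, map_smul]

lemma ContinuousLinearMap.apply_apply_eq (H : ℝ × ℝ →L[ℝ] ℝ × ℝ →L[ℝ] ℝ) (v w : ℝ × ℝ) :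
    H v w = v.1 * w.1 * H (1, 0) (1, 0) + v.1 * w.2 * H (1, 0) (0, 1) +
      v.2 * w.1 * H (0, 1) (1, 0) + v.2 * w.2 * H (0, 1) (0, 1) := by
  rw [H.apply_eq_fst_smul_add_snd_smul v, add_apply, smul_apply, smul_apply,
    (H (1, 0)).apply_eq_fst_smul_add_snd_smul w, (H (0, 1)).apply_eq_fst_smul_add_snd_smul w]
  simp only [smul_eq_mul]
  ring

lemma ContinuousLinearMap.apply_add_apply_rotate (H : ℝ × ℝ →L[ℝ] ℝ × ℝ →L[ℝ] ℝ)
    {w : ℝ × ℝ} (hw : w.1 ^ 2 + w.2 ^ 2 = 1) :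
    H w w + H (w.2, -w.1) (w.2, -w.1) = H (1, 0) (1, 0) + H (0, 1) (0, 1) := by
  rw [H.apply_apply_eq w w, H.apply_apply_eq (w.2, -w.1)]
  linear_combination (H (1, 0) (1, 0) + H (0, 1) (0, 1)) * hw

lemma laplacian_eq_frenet_frame {g : ℝ → ℝ × ℝ} {ξ η : ℝ} (h : deriv g ξ ≠ 0)
    (hψ : 1 + η * signedCurvature g ξ ≠ 0) (κ' : ℝ) (L : ℝ × ℝ →L[ℝ] ℝ)
    (H : ℝ × ℝ →L[ℝ] ℝ × ℝ →L[ℝ] ℝ) :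
    H (1, 0) (1, 0) + H (0, 1) (0, 1) =
      H (unitNormal g ξ) (unitNormal g ξ)
      + ((1 + η * signedCurvature g ξ)⁻¹ / speed g ξ) ^ 2 *
          (H ((1 + η * signedCurvature g ξ) • deriv g ξ)
              ((1 + η * signedCurvature g ξ) • deriv g ξ)
            + L ((1 + η * signedCurvature g ξ) • deriv (deriv g) ξ + (η * κ') • deriv g ξ))
      + signedCurvature g ξ * (1 + η * signedCurvature g ξ)⁻¹ * L (unitNormal g ξ)
      + (-(((1 + η * signedCurvature g ξ)⁻¹ / speed g ξ) ^ 2 *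
            (η * κ' * (1 + η * signedCurvature g ξ)⁻¹ +
              ((deriv g ξ).1 * (deriv (deriv g) ξ).1 +
                (deriv g ξ).2 * (deriv (deriv g) ξ).2) / speed g ξ ^ 2))) *
          L ((1 + η * signedCurvature g ξ) • deriv g ξ) := by
  have hs := (speed_pos h).ne'
  have hL : L (deriv (deriv g) ξ) =
      ((deriv g ξ).1 * (deriv (deriv g) ξ).1 + (deriv g ξ).2 * (deriv (deriv g) ξ).2) /
          speed g ξ ^ 2 * L (deriv g ξ) -
        signedCurvature g ξ * speed g ξ ^ 2 * L (unitNormal g ξ) := by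
    conv_lhs => rw [deriv_deriv_eq_frenet h]
    rw [map_sub, map_smul, map_smul, smul_eq_mul, smul_eq_mul]
  have hH : H (deriv g ξ) (deriv g ξ) =
      speed g ξ ^ 2 * H (unitTangent g ξ) (unitTangent g ξ) := by
    rw [deriv_eq_speed_smul_unitTangent h, map_smul, map_smul, smul_apply, smul_eq_mul,
      smul_eq_mul]
    ring
  rw [← H.apply_add_apply_rotate (unitTangent_sq_add_sq h)]
  change H (unitTangent g ξ) (unitTangent g ξ) + H (unitNormal g ξ) (unitNormal g ξ) = _
  simp only [map_add, map_smul, smul_apply, smul_eq_mul, hL, hH]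
  field_simp
  ring

/-- Transformation of the Laplacian to Frenet coordinates: if `g` is C³ on an open interval
with `g' ≠ 0`, `u` is C², and `1 + ηκ(ξ) ≠ 0`, then with `û = u ∘ P`,
`Δu(P(η,ξ)) = û_ηη + J₀ û_ξξ + J₁ û_η + J₂ û_ξ` at `(η,ξ)`, where `ψ = (1+ηκ)⁻¹`,
`J₀ = (ψ/‖g'‖)²`, `J₁ = κψ`, and `J₂ = -(ψ/‖g'‖)² (ηκ'ψ + (g'·g'')/‖g'‖²)`. -/
theorem laplacian_frenet_coords (a b : ℝ) (g : ℝ → ℝ × ℝ)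
    (hg : ContDiffOn ℝ 3 g (Ioo a b))
    (hg' : ∀ t ∈ Ioo a b, deriv g t ≠ 0)
    (u : ℝ × ℝ → ℝ) (hu : ContDiff ℝ 2 u)
    (η ξ : ℝ) (hξ : ξ ∈ Ioo a b)
    (hψ : 1 + η * signedCurvature g ξ ≠ 0) :
    pd1 (pd1 u) (frenetMap g (η, ξ)) + pd2 (pd2 u) (frenetMap g (η, ξ)) =
      pd1 (pd1 (u ∘ frenetMap g)) (η, ξ)
      + ((1 + η * signedCurvature g ξ)⁻¹ / speed g ξ) ^ 2 *
          pd2 (pd2 (u ∘ frenetMap g)) (η, ξ)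
      + signedCurvature g ξ * (1 + η * signedCurvature g ξ)⁻¹ *
          pd1 (u ∘ frenetMap g) (η, ξ)
      + (-(((1 + η * signedCurvature g ξ)⁻¹ / speed g ξ) ^ 2 *
            (η * deriv (signedCurvature g) ξ * (1 + η * signedCurvature g ξ)⁻¹ +
              ((deriv g ξ).1 * (deriv (deriv g) ξ).1 +
                (deriv g ξ).2 * (deriv (deriv g) ξ).2) / speed g ξ ^ 2))) *
          pd2 (u ∘ frenetMap g) (η, ξ) := by
  have hU : Ioo a b ∈ 𝓝 ξ := isOpen_Ioo.mem_nhds hξ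
  have hg1 : ∀ t ∈ Ioo a b, DifferentiableAt ℝ (deriv g) t := fun t ht =>
    ((hg.deriv_of_isOpen (m := 2) isOpen_Ioo le_rfl).differentiableOn
      (by norm_num)).differentiableAt (isOpen_Ioo.mem_nhds ht)
  have hg2 : DifferentiableAt ℝ (deriv (deriv g)) ξ :=
    (((hg.deriv_of_isOpen (m := 2) isOpen_Ioo le_rfl).deriv_of_isOpen (m := 1) isOpen_Ioo
      le_rfl).differentiableOn one_ne_zero).differentiableAt hU
  have hκ := (differentiableAt_signedCurvature (hg1 ξ hξ) hg2 (hg' ξ hξ)).hasDerivAt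
  have hud : Differentiable ℝ u := hu.differentiable (by norm_num)
  have hDu : Differentiable ℝ (fderiv ℝ u) :=
    (hu.fderiv_right (m := 1) le_rfl).differentiable one_ne_zero
  have hPη : ∀ t, HasDerivAt (fun r => frenetMap g (r, ξ)) (unitNormal g ξ) t :=
    fun t => hasDerivAt_frenetMap_fst g t ξ
  have hPξ : ∀ᶠ t in 𝓝 ξ, HasDerivAt (fun r => frenetMap g (η, r))
      ((1 + η * signedCurvature g t) • deriv g t) t :=
    Filter.mem_of_superset hU fun t ht => hasDerivAt_frenetMap_snd (hg1 t ht) (hg' t ht) η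
  have hV := ((hκ.const_mul η).const_add 1).smul (hg1 ξ hξ).hasDerivAt
  have hûηη : pd1 (pd1 (u ∘ frenetMap g)) (η, ξ) =
      fderiv ℝ (fderiv ℝ u) (frenetMap g (η, ξ)) (unitNormal g ξ) (unitNormal g ξ) :=
    (deriv_deriv_comp_eq hud (.of_forall hPη) (hasDerivAt_const _ _) (hDu _)).trans
      (by rw [map_zero, add_zero])
  have hûξξ : pd2 (pd2 (u ∘ frenetMap g)) (η, ξ) = _ := deriv_deriv_comp_eq hud hPξ hV (hDu _)
  have hûη : pd1 (u ∘ frenetMap g) (η, ξ) = _ :=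
    ((hud _).hasFDerivAt.comp_hasDerivAt η (hPη η)).deriv
  have hûξ : pd2 (u ∘ frenetMap g) (η, ξ) = _ :=
    ((hud _).hasFDerivAt.comp_hasDerivAt ξ hPξ.self_of_nhds).deriv
  rw [pd1_pd1_eq_fderiv hud (hDu _), pd2_pd2_eq_fderiv hud (hDu _), hûηη, hûξξ, hûη, hûξ]
  exact laplacian_eq_frenet_frame (hg' ξ hξ) hψ _ _ _
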